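/- arXiv:1709.08057 — 3 statements merged into one kernel-verified Lean document; each statement's English description precedes it below -/
import Mathlib

section
/- Let S : Fin 2 → Fin 2 → Fin 2 → Fin 2 → ℂ (components S_{α β̄ γ σ̄} of a Chern-type tensor with respect to the identity Hermitian metric on ℂ², with the first and third indices unbarred and the second and fourth barred) satisfy: (i) S α β γ σ = S γ β α σ for all indices (symmetry in the unbarred indices); (ii) S α β γ σ = S α σ γ β for all indices (symmetry in the barred indices); (iii) S β α σ γ = conj (S α β γ σ) for all indices (Hermitian symmetry); (iv) ∑_{t} S α t t σ = 0 for all α, σ (trace-freeness with respect to the identity Levi form). Then for all α, β one has ∑_{ρ,γ,σ} S α ρ γ σ · conj (S β ρ γ σ) = (1/2) · (∑_{μ,ν,κ,λ} ‖S μ ν κ λ‖²) · (if α = β then 1 else 0). (This is the identity 𝒮_{αβ̄} = S_{αρ̄γσ̄} S^{ρ̄}{}_{β̄}{}^{σ̄γ} − ½|S|² h_{αβ̄} = 0 valid in CR dimension n = 2, equation (mS) of the paper, proved by skew-symmetrising three indices in a 2-dimensional complex space.) -/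
/-!
In dimension two any antisymmetrisation over three indices vanishes: the `3 × 3` determinant
`det (δ_{x_i y_j})` has two equal rows by pigeonhole. Contracting this six-term identity with
`K(x₁, x₂, y₁, y₂) = ∑ S_{x₁ ȳ₁ a b̄} conj S_{y₂ x̄₂ a b̄}`, two of the six terms are
`∑ S_{α ρ̄ γ σ̄} conj S_{β ρ̄ γ σ̄}` (one of them after Hermitian symmetry), one is `|S|² δ_{αβ}`,
and the other three contain a trace of `S` and vanish.
-/

open Finset

theorem Matrix.det_of_comp_eq_zero_of_card_lt {ι κ R : Type*} [Fintype ι] [DecidableEq ι]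
    [Fintype κ] [CommRing R] (δ : κ → κ → R) (f g : ι → κ)
    (hcard : Fintype.card κ < Fintype.card ι) :
    (Matrix.of fun i j => δ (f i) (g j)).det = 0 := by
  obtain ⟨i, j, hij, hf⟩ := Fintype.exists_ne_map_eq_of_card_lt f hcard
  exact Matrix.det_zero_of_row_eq hij (funext fun k => by simp [hf])

theorem alternating_sum_three_eq_zero_of_card_lt {ι R : Type*} [Fintype ι]
    [CommRing R] (hcard : Fintype.card ι < 3) (δ : ι → ι → R) (a b c d e f : ι) :
    δ a d * δ b e * δ c f - δ a d * δ b f * δ c e - δ a e * δ b d * δ c f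
      + δ a e * δ b f * δ c d + δ a f * δ b d * δ c e - δ a f * δ b e * δ c d = 0 := by
  have := Matrix.det_of_comp_eq_zero_of_card_lt δ ![a, b, c] ![d, e, f]
    (by simpa using hcard)
  rwa [Matrix.det_fin_three] at this

theorem sum_contraction_eq_of_card_lt_three {ι R : Type*} [Fintype ι] [DecidableEq ι]
    [CommRing R] (hcard : Fintype.card ι < 3) (K : ι → ι → ι → ι → R) (α β : ι) :
    ∑ p, K p β α p + ∑ q, K β q q α = ∑ q, K β q α q + ∑ p, K p β p α
      + if α = β then ∑ p, ∑ q, K p q q p - ∑ p, ∑ q, K p q p q else 0 := by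
  let δ : ι → ι → R := (1 : Matrix ι ι R)
  have key : ∑ p, ∑ q, ∑ r, ∑ s, (δ α β * δ p r * δ q s - δ α β * δ p s * δ q r
      - δ α r * δ p β * δ q s + δ α r * δ p s * δ q β + δ α s * δ p β * δ q r
      - δ α s * δ p r * δ q β) * K p q r s = 0 := by
    simp only [alternating_sum_three_eq_zero_of_card_lt hcard, zero_mul, sum_const_zero]
  simp only [δ, Matrix.one_apply, mul_ite, mul_one, mul_zero, sub_mul, add_mul, ite_mul, one_mul,
    zero_mul, sum_sub_distrib, sum_add_distrib, sum_ite_eq, sum_ite_eq', sum_ite_irrel, mem_univ,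
    ↓reduceIte, sum_const_zero] at key
  split_ifs at key ⊢ <;> linear_combination key

section ChernTensor

variable {ι R : Type*} [Fintype ι] [CommRing R] {S : ι → ι → ι → ι → R}

theorem sum_diag_eq_zero (hsym_unbarred : ∀ α β γ σ, S α β γ σ = S γ β α σ)
    (htrace : ∀ α σ, ∑ t, S α t t σ = 0) (γ σ : ι) : ∑ t, S t t γ σ = 0 := by
  simpa only [hsym_unbarred _ _ γ] using htrace γ σ

theorem sum_diag_mul_eq_zero (hsym_unbarred : ∀ α β γ σ, S α β γ σ = S γ β α σ)
    (htrace : ∀ α σ, ∑ t, S α t t σ = 0) (g : ι → ι → R) :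
    ∑ p, ∑ a, ∑ b, S p p a b * g a b = 0 := by
  rw [sum_comm]
  refine sum_eq_zero fun a _ => ?_
  rw [sum_comm]
  refine sum_eq_zero fun b _ => ?_
  rw [← sum_mul, sum_diag_eq_zero hsym_unbarred htrace, zero_mul]

theorem two_mul_sum_mul_star_eq_ite [StarRing R] [DecidableEq ι] (hcard : Fintype.card ι < 3)
    (hsym_unbarred : ∀ α β γ σ, S α β γ σ = S γ β α σ)
    (hherm : ∀ α β γ σ, S β α σ γ = star (S α β γ σ))
    (htrace : ∀ α σ, ∑ t, S α t t σ = 0) (α β : ι) :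
    2 * ∑ ρ, ∑ γ, ∑ σ, S α ρ γ σ * star (S β ρ γ σ) =
      if α = β then ∑ μ, ∑ ν, ∑ κ, ∑ lam, S μ ν κ lam * star (S μ ν κ lam) else 0 := by
  have key := sum_contraction_eq_of_card_lt_three hcard
    (fun x₁ x₂ y₁ y₂ => ∑ a, ∑ b, S x₁ y₁ a b * star (S y₂ x₂ a b)) β α
  have h_herm : ∑ p, ∑ a, ∑ b, S p β a b * star (S p α a b) =
      ∑ ρ, ∑ γ, ∑ σ, S α ρ γ σ * star (S β ρ γ σ) := by
    simp only [hherm β, hherm α, star_star, mul_comm (star _)]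
    exact sum_congr rfl fun p _ => sum_comm
  have h_trace_star : ∑ q, ∑ a, ∑ b, S α β a b * star (S q q a b) = 0 := by
    calc _ = ∑ a, ∑ b, S α β a b * star (∑ q, S q q a b) := by
          simp only [star_sum, mul_sum]
          rw [sum_comm]
          exact sum_congr rfl fun a _ => sum_comm
      _ = 0 := by
          simp only [sum_diag_eq_zero hsym_unbarred htrace, star_zero, mul_zero, sum_const_zero]
  have h_trace : ∑ p, ∑ a, ∑ b, S p p a b * star (S β α a b) = 0 :=
    sum_diag_mul_eq_zero hsym_unbarred htrace _
  have h_trace_trace : ∑ p, ∑ q, ∑ a, ∑ b, S p p a b * star (S q q a b) = 0 := by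
    rw [sum_comm]
    exact sum_eq_zero fun q _ => sum_diag_mul_eq_zero hsym_unbarred htrace _
  rw [h_herm, h_trace_star, h_trace, h_trace_trace] at key
  simp only [eq_comm (a := β)] at key
  split_ifs at key ⊢ <;> linear_combination key

end ChernTensor

theorem chern_tensor_identity_dim2_general
    (S : Fin 2 → Fin 2 → Fin 2 → Fin 2 → ℂ)
    (hsym_unbarred : ∀ α β γ σ, S α β γ σ = S γ β α σ)
    (hherm : ∀ α β γ σ, S β α σ γ = (starRingEnd ℂ) (S α β γ σ))
    (htrace : ∀ α σ, ∑ t, S α t t σ = 0) :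
    ∀ α β : Fin 2,
      (∑ ρ, ∑ γ, ∑ σ, S α ρ γ σ * (starRingEnd ℂ) (S β ρ γ σ)) =
        (1 / 2 : ℂ) * ((∑ μ, ∑ ν, ∑ κ, ∑ lam, ((‖S μ ν κ lam‖ ^ 2 : ℝ) : ℂ))) *
          (if α = β then 1 else 0) := by
  intro α β
  have h := two_mul_sum_mul_star_eq_ite (by simp) hsym_unbarred hherm htrace α β
  have hnorm (z : ℂ) : ((‖z‖ ^ 2 : ℝ) : ℂ) = z * star z := by
    rw [Complex.star_def, Complex.mul_conj, Complex.sq_norm]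
  simp only [hnorm, ← Complex.star_def]
  split_ifs at h ⊢ <;> linear_combination h / 2

/-- The identity `𝒮_{αβ̄} = S_{αρ̄γσ̄} S^{ρ̄}{}_{β̄}{}^{σ̄γ} − ½|S|² h_{αβ̄} = 0` valid for a
Chern-type (CR Weyl) tensor in CR dimension `n = 2`. -/
theorem chern_tensor_identity_dim2
    (S : Fin 2 → Fin 2 → Fin 2 → Fin 2 → ℂ)
    (hsym_unbarred : ∀ α β γ σ, S α β γ σ = S γ β α σ)
    (hsym_barred : ∀ α β γ σ, S α β γ σ = S α σ γ β)
    (hherm : ∀ α β γ σ, S β α σ γ = (starRingEnd ℂ) (S α β γ σ))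
    (htrace : ∀ α σ, ∑ t, S α t t σ = 0) :
    ∀ α β : Fin 2,
      (∑ ρ, ∑ γ, ∑ σ, S α ρ γ σ * (starRingEnd ℂ) (S β ρ γ σ)) =
        (1 / 2 : ℂ) * ((∑ μ, ∑ ν, ∑ κ, ∑ lam, ((‖S μ ν κ lam‖ ^ 2 : ℝ) : ℂ))) *
          (if α = β then 1 else 0) :=
  chern_tensor_identity_dim2_general S hsym_unbarred hherm htrace
end

section
/- Fix N ≥ 1 and a signature function ε : Fin N → {1, −1}. For f : ℂ^N → ℂ twice continuously differentiable in the real sense, with Wirtinger derivatives ∂_A f(x) = ½(Df(x)(e_A) − i·Df(x)(i·e_A)) and ∂_{Ā} f(x) = ½(Df(x)(e_A) + i·Df(x)(i·e_A)), Euler operators Ef(x) = ∑_A x_A·∂_A f(x) and Ēf(x) = ∑_A conj(x_A)·∂_{Ā} f(x), flat ambient Laplacian Δf = ∑_A ε_A·∂_A ∂_{Ā} f, and r(x) = ∑_A ε_A·|x_A|², one has, at every point: Δ(r·f) = r·Δf + N·f + Ef + Ēf. (This is the flat-model case of the commutator identity [Δ, r] = n + E + Ē + 2 on the ambient space of a CR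 manifold of dimension 2n+1, where N = n + 2.) -/
open Finset

/-- Wirtinger derivative `∂_A f` of a function on `ℂ^N`, defined via the real Fréchet
derivative. -/
noncomputable def wder {N : ℕ} (f : (Fin N → ℂ) → ℂ) (A : Fin N) (x : Fin N → ℂ) : ℂ :=
  (1 / 2) * ((fderiv ℝ f x) (Pi.single A 1) - Complex.I * (fderiv ℝ f x) (Pi.single A Complex.I))

/-- Conjugate Wirtinger derivative `∂_{Ā} f`. -/
noncomputable def wderBar {N : ℕ} (f : (Fin N → ℂ) → ℂ) (A : Fin N) (x : Fin N → ℂ) : ℂ :=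
  (1 / 2) * ((fderiv ℝ f x) (Pi.single A 1) + Complex.I * (fderiv ℝ f x) (Pi.single A Complex.I))

/-- Holomorphic Euler operator `E f = ∑_A x_A ∂_A f`. -/
noncomputable def eulerE {N : ℕ} (f : (Fin N → ℂ) → ℂ) (x : Fin N → ℂ) : ℂ :=
  ∑ A, x A * wder f A x

/-- Antiholomorphic Euler operator `Ē f = ∑_A conj(x_A) ∂_{Ā} f`. -/
noncomputable def eulerEbar {N : ℕ} (f : (Fin N → ℂ) → ℂ) (x : Fin N → ℂ) : ℂ :=
  ∑ A, (starRingEnd ℂ) (x A) * wderBar f A x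

/-- The flat ambient Laplacian `Δ f = ∑_A ε_A ∂_A ∂_{Ā} f` for a signature `ε`. -/
noncomputable def ambLap {N : ℕ} (ε : Fin N → ℝ) (f : (Fin N → ℂ) → ℂ) (x : Fin N → ℂ) : ℂ :=
  ∑ A, (ε A : ℂ) * wder (fun y => wderBar f A y) A x

/-- The defining function of the null cone, `r(x) = ∑_A ε_A |x_A|²`. -/
noncomputable def rFun {N : ℕ} (ε : Fin N → ℝ) (x : Fin N → ℂ) : ℂ :=
  ∑ A, (ε A : ℂ) * (Complex.normSq (x A) : ℂ)

/-! Since `∂̄_A r = ε_A x_A` and `∂_A r = ε_A x̄_A`, the Leibniz rule gives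
`∂_A ∂̄_A (r f) = r ∂_A ∂̄_A f + ε_A (f + x_A ∂_A f + x̄_A ∂̄_A f)`;
multiplying by `ε_A`, using `ε_A² = 1` and summing over `A` yields the identity. -/

open ComplexConjugate

section Wirtinger

variable {N : ℕ}

noncomputable def wderLin (A : Fin N) : ((Fin N → ℂ) →L[ℝ] ℂ) →ₗ[ℂ] ℂ where
  toFun L := (1 / 2) * (L (Pi.single A 1) - Complex.I * L (Pi.single A Complex.I))
  map_add' L M := by simp only [add_apply]; ring
  map_smul' c L := by
    simp only [smul_apply, smul_eq_mul, RingHom.id_apply]; ring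

noncomputable def wderBarLin (A : Fin N) : ((Fin N → ℂ) →L[ℝ] ℂ) →ₗ[ℂ] ℂ where
  toFun L := (1 / 2) * (L (Pi.single A 1) + Complex.I * L (Pi.single A Complex.I))
  map_add' L M := by simp only [add_apply]; ring
  map_smul' c L := by
    simp only [smul_apply, smul_eq_mul, RingHom.id_apply]; ring

theorem wder_eq_wderLin (f : (Fin N → ℂ) → ℂ) (A : Fin N) (x : Fin N → ℂ) :
    wder f A x = wderLin A (fderiv ℝ f x) := rfl

theorem wderBar_eq_wderBarLin (f : (Fin N → ℂ) → ℂ) (A : Fin N) (x : Fin N → ℂ) :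
    wderBar f A x = wderBarLin A (fderiv ℝ f x) := rfl

theorem map_single_I (L : (Fin N → ℂ) →L[ℂ] ℂ) (A : Fin N) :
    L (Pi.single A Complex.I) = Complex.I * L (Pi.single A 1) := by
  rw [← smul_eq_mul, ← L.map_smul, ← Pi.single_smul', smul_eq_mul, mul_one]

theorem wderLin_restrictScalars (L : (Fin N → ℂ) →L[ℂ] ℂ) (A : Fin N) :
    wderLin A (L.restrictScalars ℝ) = L (Pi.single A 1) := by
  change (1 / 2) * (L (Pi.single A 1) - Complex.I * L (Pi.single A Complex.I)) = _
  rw [map_single_I]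
  linear_combination (-(1 / 2) * L (Pi.single A 1)) * Complex.I_mul_I

theorem wderBarLin_restrictScalars (L : (Fin N → ℂ) →L[ℂ] ℂ) (A : Fin N) :
    wderBarLin A (L.restrictScalars ℝ) = 0 := by
  change (1 / 2) * (L (Pi.single A 1) + Complex.I * L (Pi.single A Complex.I)) = _
  rw [map_single_I]
  linear_combination ((1 / 2) * L (Pi.single A 1)) * Complex.I_mul_I

theorem wderLin_conj_restrictScalars (L : (Fin N → ℂ) →L[ℂ] ℂ) (A : Fin N) :
    wderLin A ((Complex.conjCLE : ℂ →L[ℝ] ℂ).comp (L.restrictScalars ℝ)) = 0 := by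
  change (1 / 2) * (conj (L (Pi.single A 1)) - Complex.I * conj (L (Pi.single A Complex.I))) = _
  rw [map_single_I, map_mul, Complex.conj_I]
  linear_combination ((1 / 2) * conj (L (Pi.single A 1))) * Complex.I_mul_I

theorem wderBarLin_conj_restrictScalars (L : (Fin N → ℂ) →L[ℂ] ℂ) (A : Fin N) :
    wderBarLin A ((Complex.conjCLE : ℂ →L[ℝ] ℂ).comp (L.restrictScalars ℝ)) =
      conj (L (Pi.single A 1)) := by
  change (1 / 2) * (conj (L (Pi.single A 1)) + Complex.I * conj (L (Pi.single A Complex.I))) = _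
  rw [map_single_I, map_mul, Complex.conj_I]
  linear_combination (-(1 / 2) * conj (L (Pi.single A 1))) * Complex.I_mul_I

section Leibniz

variable {f g : (Fin N → ℂ) → ℂ} {A : Fin N} {x : Fin N → ℂ}

theorem wder_add (hf : DifferentiableAt ℝ f x) (hg : DifferentiableAt ℝ g x) :
    wder (fun y => f y + g y) A x = wder f A x + wder g A x := by
  simp only [wder_eq_wderLin, fderiv_fun_add hf hg, map_add]

theorem wder_const_mul (c : ℂ) (hf : DifferentiableAt ℝ f x) :
    wder (fun y => c * f y) A x = c * wder f A x := by
  simp only [wder_eq_wderLin, fderiv_const_mul hf c, map_smul, smul_eq_mul]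

theorem wder_mul (hf : DifferentiableAt ℝ f x) (hg : DifferentiableAt ℝ g x) :
    wder (fun y => f y * g y) A x = f x * wder g A x + g x * wder f A x := by
  simp only [wder_eq_wderLin, fderiv_fun_mul hf hg, map_add, map_smul, smul_eq_mul]

theorem wderBar_mul (hf : DifferentiableAt ℝ f x) (hg : DifferentiableAt ℝ g x) :
    wderBar (fun y => f y * g y) A x = f x * wderBar g A x + g x * wderBar f A x := by
  simp only [wderBar_eq_wderBarLin, fderiv_fun_mul hf hg, map_add, map_smul, smul_eq_mul]

end Leibniz

theorem wder_apply_self (A : Fin N) (x : Fin N → ℂ) : wder (fun y => y A) A x = 1 := by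
  rw [wder_eq_wderLin, (hasFDerivAt_apply A x).fderiv]
  exact (wderLin_restrictScalars (ContinuousLinearMap.proj A) A).trans (Pi.single_eq_same A 1)

theorem hasFDerivAt_rFun (ε : Fin N → ℝ) (x : Fin N → ℂ) :
    HasFDerivAt (rFun ε)
      (∑ B, (ε B : ℂ) • (x B • (Complex.conjCLE : ℂ →L[ℝ] ℂ).comp
          ((ContinuousLinearMap.proj B : (Fin N → ℂ) →L[ℂ] ℂ).restrictScalars ℝ) +
        conj (x B) • (ContinuousLinearMap.proj B : (Fin N → ℂ) →L[ℂ] ℂ).restrictScalars ℝ)) x := by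
  have hr : rFun ε = fun y => ∑ B, (ε B : ℂ) * (y B * conj (y B)) := by
    funext y
    simp only [rFun, Complex.mul_conj]
  rw [hr]
  refine HasFDerivAt.fun_sum fun B _ => HasFDerivAt.const_mul ?_ _
  exact (hasFDerivAt_apply B x).mul ((Complex.conjCLE : ℂ →L[ℝ] ℂ).hasFDerivAt.comp x
    (hasFDerivAt_apply B x))

theorem wder_rFun (ε : Fin N → ℝ) (A : Fin N) (x : Fin N → ℂ) :
    wder (rFun ε) A x = ε A * conj (x A) := by
  simp [wder_eq_wderLin, (hasFDerivAt_rFun ε x).fderiv, wderLin_restrictScalars,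
    wderLin_conj_restrictScalars, Pi.single_apply]

theorem wderBar_rFun (ε : Fin N → ℝ) (A : Fin N) (x : Fin N → ℂ) :
    wderBar (rFun ε) A x = ε A * x A := by
  simp [wderBar_eq_wderBarLin, (hasFDerivAt_rFun ε x).fderiv,
    wderBarLin_restrictScalars, wderBarLin_conj_restrictScalars, Pi.single_apply]

theorem differentiable_wderBar {f : (Fin N → ℂ) → ℂ} (hf : ContDiff ℝ 2 f) (A : Fin N) :
    Differentiable ℝ (wderBar f A) := by
  have hDf : ∀ v, Differentiable ℝ fun y => fderiv ℝ f y v := fun v =>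
    ((hf.fderiv_right (m := 1) le_rfl).clm_apply contDiff_const).differentiable one_ne_zero
  exact (((hDf _).add ((hDf _).const_mul Complex.I)).const_mul (1 / 2))

theorem wder_wderBar_rFun_mul (ε : Fin N → ℝ) {f : (Fin N → ℂ) → ℂ} (hf : ContDiff ℝ 2 f)
    (A : Fin N) (x : Fin N → ℂ) :
    wder (fun y => wderBar (fun z => rFun ε z * f z) A y) A x =
      rFun ε x * wder (fun y => wderBar f A y) A x +
        ε A * (f x + x A * wder f A x + conj (x A) * wderBar f A x) := by
  have hf1 : Differentiable ℝ f := hf.differentiable (by norm_num)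
  have hr : Differentiable ℝ (rFun ε) := fun y => (hasFDerivAt_rFun ε y).differentiableAt
  have hcoord : Differentiable ℝ fun y : Fin N → ℂ => y A := differentiable_apply A
  have hbar : (fun y => wderBar (fun z => rFun ε z * f z) A y) =
      fun y => rFun ε y * wderBar f A y + (ε A : ℂ) * (y A * f y) := by
    funext y
    rw [wderBar_mul (hr y) (hf1 y), wderBar_rFun]
    ring
  rw [hbar, wder_add ((hr.fun_mul (differentiable_wderBar hf A)) x)
      (((hcoord.fun_mul hf1).const_mul _) x), wder_mul (hr x) (differentiable_wderBar hf A x),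
    wder_const_mul _ ((hcoord.fun_mul hf1) x), wder_mul (hcoord x) (hf1 x), wder_rFun,
    wder_apply_self]
  ring

end Wirtinger

theorem ambient_lap_r_commutator_general (N : ℕ) (ε : Fin N → ℝ)
    (hε : ∀ A, ε A = 1 ∨ ε A = -1)
    (f : (Fin N → ℂ) → ℂ) (hf : ContDiff ℝ 2 f) (x : Fin N → ℂ) :
    ambLap ε (fun y => rFun ε y * f y) x =
      rFun ε x * ambLap ε f x + (N : ℂ) * f x + eulerE f x + eulerEbar f x := by
  have hε_sq : ∀ A, (ε A : ℂ) * ε A = 1 := fun A => by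
    rcases hε A with h | h <;> simp [h]
  have hterm : ∀ A, (ε A : ℂ) * wder (fun y => wderBar (fun z => rFun ε z * f z) A y) A x =
      rFun ε x * ((ε A : ℂ) * wder (fun y => wderBar f A y) A x) + f x +
        x A * wder f A x + conj (x A) * wderBar f A x := fun A => by
    rw [wder_wderBar_rFun_mul ε hf]
    linear_combination (f x + x A * wder f A x + conj (x A) * wderBar f A x) * hε_sq A
  simp only [ambLap, eulerE, eulerEbar, hterm, sum_add_distrib, ← mul_sum, sum_const, card_univ,
    Fintype.card_fin, nsmul_eq_mul]

/-- The flat-model case of the ambient commutator identity `[Δ, r] = n + E + Ē + 2`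
(with `N = n + 2`). -/
theorem ambient_lap_r_commutator (N : ℕ) (hN : 1 ≤ N) (ε : Fin N → ℝ)
    (hε : ∀ A, ε A = 1 ∨ ε A = -1)
    (f : (Fin N → ℂ) → ℂ) (hf : ContDiff ℝ 2 f) (x : Fin N → ℂ) :
    ambLap ε (fun y => rFun ε y * f y) x =
      rFun ε x * ambLap ε f x + (N : ℂ) * f x + eulerE f x + eulerEbar f x :=
  ambient_lap_r_commutator_general N ε hε f hf x
end

section
/- Fix N ≥ 1, a signature function ε : Fin N → {1, −1}, and a positive integer k. Let f : ℂ^N → ℂ be infinitely differentiable in the real sense and suppose that, at every point, Ef + Ēf = (k − 1 − N)·f, where E, Ē are the Euler operators below. Then, with Δ the flat ambient Laplacian and r(x) = ∑_A ε_A·|x_A|², one has at every point: Δ^k(r·f) = r·(Δ^k f). In particular Δ^k(r·f) vanishes on the null cone {r = 0}. (This is the flat-model case of the tangentiality statement [Δ^k, r] = r·Op on ambient functions of homogeneity (−(n+3−k)/2, −(n+3−k)/2) with N = n+2, which makes the CR GJMS operator P_{2k} f = (−2Δ)^k f̃ |_𝒩 independent of the chosen homogeneous ambient extension f̃.) -/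
open Finset

section Aux

noncomputable def Dv {N : ℕ} (v : Fin N → ℂ) (f : (Fin N → ℂ) → ℂ) (x : Fin N → ℂ) : ℂ :=
  fderiv ℝ f x v

variable {N : ℕ}

lemma contDiff_Dv (v : Fin N → ℂ) {f : (Fin N → ℂ) → ℂ} (hf : ContDiff ℝ (⊤:ℕ∞) f) :
    ContDiff ℝ (⊤:ℕ∞) (Dv v f) := by
  have h : ContDiff ℝ (⊤:ℕ∞) (fderiv ℝ f) := hf.fderiv_right (by exact_mod_cast le_rfl)
  exact h.clm_apply contDiff_const

lemma Dv_swap {f : (Fin N → ℂ) → ℂ} (hf : ContDiff ℝ (⊤:ℕ∞) f) (v w x) :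
    Dv v (Dv w f) x = Dv w (Dv v f) x := by
  have hsym : IsSymmSndFDerivAt ℝ f x :=
    hf.contDiffAt.isSymmSndFDerivAt (n := (⊤:ℕ∞)) (by simp [minSmoothness_of_isRCLikeNormedField]; exact WithTop.coe_le_coe.mpr le_top)
  have hd : DifferentiableAt ℝ (fderiv ℝ f) x :=
    ((hf.fderiv_right (m := (⊤:ℕ∞)) (by exact_mod_cast le_rfl)).differentiable
      (by simp)) x
  have key : ∀ u : Fin N → ℂ, fderiv ℝ (fun y => fderiv ℝ f y u) x
      = (fderiv ℝ (fderiv ℝ f) x).flip u := by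
    intro u
    have := fderiv_clm_apply (c := fderiv ℝ f) (u := fun _ => u) hd (differentiableAt_const u)
    simpa using this
  show fderiv ℝ (fun y => fderiv ℝ f y w) x v = fderiv ℝ (fun y => fderiv ℝ f y v) x w
  rw [key w, key v]
  exact hsym v w


lemma sdiff {g : (Fin N → ℂ) → ℂ} (hg : ContDiff ℝ (⊤:ℕ∞) g) : Differentiable ℝ g :=
  hg.differentiable (by simp)

lemma Dv_add {g h : (Fin N → ℂ) → ℂ} (hg : ContDiff ℝ (⊤:ℕ∞) g) (hh : ContDiff ℝ (⊤:ℕ∞) h)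
    (v x) : Dv v (fun y => g y + h y) x = Dv v g x + Dv v h x := by
  show fderiv ℝ (fun y => g y + h y) x v = _
  rw [fderiv_fun_add (sdiff hg x)
    (sdiff hh x)]
  rfl

lemma Dv_const_mul {g : (Fin N → ℂ) → ℂ} (hg : ContDiff ℝ (⊤:ℕ∞) g) (c : ℂ) (v x) :
    Dv v (fun y => c * g y) x = c * Dv v g x := by
  show fderiv ℝ (fun y => c * g y) x v = _
  rw [fderiv_const_mul (sdiff hg x) c]
  rfl

lemma Dv_mul {g h : (Fin N → ℂ) → ℂ} (hg : ContDiff ℝ (⊤:ℕ∞) g) (hh : ContDiff ℝ (⊤:ℕ∞) h)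
    (v x) : Dv v (fun y => g y * h y) x = g x * Dv v h x + h x * Dv v g x := by
  show fderiv ℝ (fun y => g y * h y) x v = _
  rw [fderiv_fun_mul (sdiff hg x)
    (sdiff hh x)]
  simp [Dv, smul_eq_mul]

lemma Dv_sum {ι : Type*} (s : Finset ι) (g : ι → (Fin N → ℂ) → ℂ)
    (hg : ∀ i ∈ s, ContDiff ℝ (⊤:ℕ∞) (g i)) (v x) :
    Dv v (fun y => ∑ i ∈ s, g i y) x = ∑ i ∈ s, Dv v (g i) x := by
  show fderiv ℝ (fun y => ∑ i ∈ s, g i y) x v = _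
  rw [fderiv_fun_sum (fun i hi => sdiff (hg i hi) x)]
  simp [Dv]

lemma Dv_coord (B : Fin N) (v x) : Dv v (fun y => y B) x = v B := by
  have : (fun y : Fin N → ℂ => y B) = (ContinuousLinearMap.proj (R := ℝ) (φ := fun _ : Fin N => ℂ) B) := rfl
  show fderiv ℝ _ x v = v B
  rw [this, ContinuousLinearMap.fderiv]
  rfl

lemma Dv_conj_coord (B : Fin N) (v x) :
    Dv v (fun y => (starRingEnd ℂ) (y B)) x = (starRingEnd ℂ) (v B) := by
  have : (fun y : Fin N → ℂ => (starRingEnd ℂ) (y B)) =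
      (Complex.conjCLE.toContinuousLinearMap.comp
        (ContinuousLinearMap.proj (R := ℝ) (φ := fun _ : Fin N => ℂ) B)) := rfl
  show fderiv ℝ _ x v = _
  rw [this, ContinuousLinearMap.fderiv]
  rfl

lemma contDiff_coord (B : Fin N) : ContDiff ℝ (⊤:ℕ∞) (fun y : Fin N → ℂ => y B) :=
  (ContinuousLinearMap.proj (R := ℝ) (φ := fun _ : Fin N => ℂ) B).contDiff

lemma contDiff_conj_coord (B : Fin N) :
    ContDiff ℝ (⊤:ℕ∞) (fun y : Fin N → ℂ => (starRingEnd ℂ) (y B)) :=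
  (Complex.conjCLE.toContinuousLinearMap.comp
    (ContinuousLinearMap.proj (R := ℝ) (φ := fun _ : Fin N => ℂ) B)).contDiff

noncomputable def mix (a b : ℂ) (A : Fin N) (f : (Fin N → ℂ) → ℂ) (x : Fin N → ℂ) : ℂ :=
  a * Dv (Pi.single A 1) f x + b * Dv (Pi.single A Complex.I) f x

lemma contDiff_mix (a b : ℂ) (A : Fin N) {f : (Fin N → ℂ) → ℂ} (hf : ContDiff ℝ (⊤:ℕ∞) f) :
    ContDiff ℝ (⊤:ℕ∞) (mix a b A f) :=
  (contDiff_const.mul (contDiff_Dv _ hf)).add (contDiff_const.mul (contDiff_Dv _ hf))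

lemma mix_add (a b : ℂ) (A : Fin N) {g h : (Fin N → ℂ) → ℂ}
    (hg : ContDiff ℝ (⊤:ℕ∞) g) (hh : ContDiff ℝ (⊤:ℕ∞) h) (x) :
    mix a b A (fun y => g y + h y) x = mix a b A g x + mix a b A h x := by
  simp only [mix, Dv_add hg hh]; ring

lemma mix_const_mul (a b : ℂ) (A : Fin N) {g : (Fin N → ℂ) → ℂ}
    (hg : ContDiff ℝ (⊤:ℕ∞) g) (c : ℂ) (x) :
    mix a b A (fun y => c * g y) x = c * mix a b A g x := by
  simp only [mix, Dv_const_mul hg]; ring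

lemma mix_sum (a b : ℂ) (A : Fin N) {ι : Type*} (s : Finset ι) (g : ι → (Fin N → ℂ) → ℂ)
    (hg : ∀ i ∈ s, ContDiff ℝ (⊤:ℕ∞) (g i)) (x) :
    mix a b A (fun y => ∑ i ∈ s, g i y) x = ∑ i ∈ s, mix a b A (g i) x := by
  simp only [mix, Dv_sum s g hg, Finset.mul_sum, Finset.sum_add_distrib]

lemma mix_mul (a b : ℂ) (A : Fin N) {g h : (Fin N → ℂ) → ℂ}
    (hg : ContDiff ℝ (⊤:ℕ∞) g) (hh : ContDiff ℝ (⊤:ℕ∞) h) (x) :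
    mix a b A (fun y => g y * h y) x = g x * mix a b A h x + h x * mix a b A g x := by
  simp only [mix, Dv_mul hg hh]; ring

lemma mix_comm (a b c d : ℂ) (A B : Fin N) {f : (Fin N → ℂ) → ℂ}
    (hf : ContDiff ℝ (⊤:ℕ∞) f) (x) :
    mix a b A (fun y => mix c d B f y) x = mix c d B (fun y => mix a b A f y) x := by
  have expand : ∀ (a b c d : ℂ) (A B : Fin N) (x),
      mix a b A (fun y => mix c d B f y) x
        = a * (c * Dv (Pi.single A 1) (Dv (Pi.single B 1) f) x
             + d * Dv (Pi.single A 1) (Dv (Pi.single B Complex.I) f) x)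
        + b * (c * Dv (Pi.single A Complex.I) (Dv (Pi.single B 1) f) x
             + d * Dv (Pi.single A Complex.I) (Dv (Pi.single B Complex.I) f) x) := by
    intro a b c d A B x
    have h1 : ∀ v u, Dv v (fun y => mix c d B f y) u
        = c * Dv v (Dv (Pi.single B 1) f) u + d * Dv v (Dv (Pi.single B Complex.I) f) u := by
      intro v u
      have : (fun y => mix c d B f y)
          = fun y => c * Dv (Pi.single B 1) f y + d * Dv (Pi.single B Complex.I) f y := rfl
      rw [this, Dv_add (contDiff_const.mul (contDiff_Dv _ hf))
          (contDiff_const.mul (contDiff_Dv _ hf)),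
        Dv_const_mul (contDiff_Dv _ hf), Dv_const_mul (contDiff_Dv _ hf)]
    have h2 : mix a b A (fun y => mix c d B f y) x
        = a * Dv (Pi.single A 1) (fun y => mix c d B f y) x
        + b * Dv (Pi.single A Complex.I) (fun y => mix c d B f y) x := rfl
    rw [h2, h1, h1]
  rw [expand, expand]
  rw [Dv_swap hf (Pi.single B 1) (Pi.single A 1),
    Dv_swap hf (Pi.single B 1) (Pi.single A Complex.I),
    Dv_swap hf (Pi.single B Complex.I) (Pi.single A 1),
    Dv_swap hf (Pi.single B Complex.I) (Pi.single A Complex.I)]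
  ring

lemma mix_coord (a b : ℂ) (A B : Fin N) (x) :
    mix a b A (fun y => y B) x = if B = A then a + b * Complex.I else 0 := by
  simp only [mix, Dv_coord, Pi.single_apply]
  by_cases h : B = A <;> simp [h] <;> ring

lemma mix_conj_coord (a b : ℂ) (A B : Fin N) (x) :
    mix a b A (fun y => (starRingEnd ℂ) (y B)) x = if B = A then a - b * Complex.I else 0 := by
  simp only [mix, Dv_conj_coord, Pi.single_apply]
  by_cases h : B = A <;> simp [h] <;> ring

end Aux

section Aux2
variable {N : ℕ}

noncomputable def Wd (A : Fin N) (g : (Fin N → ℂ) → ℂ) : (Fin N → ℂ) → ℂ :=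
  mix 2⁻¹ (-(2⁻¹ * Complex.I)) A g

noncomputable def Wb (A : Fin N) (g : (Fin N → ℂ) → ℂ) : (Fin N → ℂ) → ℂ :=
  mix 2⁻¹ (2⁻¹ * Complex.I) A g

lemma wder_Wd (f : (Fin N → ℂ) → ℂ) (A : Fin N) : wder f A = Wd A f := by
  funext x
  simp only [wder, Wd, mix, Dv]
  ring

lemma wderBar_Wb (f : (Fin N → ℂ) → ℂ) (A : Fin N) : wderBar f A = Wb A f := by
  funext x
  simp only [wderBar, Wb, mix, Dv]
  ring

lemma contDiff_Wd (A : Fin N) {g} (hg : ContDiff ℝ (⊤:ℕ∞) g) : ContDiff ℝ (⊤:ℕ∞) (Wd A g) :=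
  contDiff_mix _ _ _ hg
lemma contDiff_Wb (A : Fin N) {g} (hg : ContDiff ℝ (⊤:ℕ∞) g) : ContDiff ℝ (⊤:ℕ∞) (Wb A g) :=
  contDiff_mix _ _ _ hg

lemma Wd_coord (A B : Fin N) (x) : Wd A (fun y => y B) x = if B = A then 1 else 0 := by
  rw [Wd, mix_coord]
  by_cases h : B = A <;> simp [h, Complex.ext_iff] <;> norm_num
lemma Wd_conj_coord (A B : Fin N) (x) : Wd A (fun y => (starRingEnd ℂ) (y B)) x = 0 := by
  rw [Wd, mix_conj_coord]
  by_cases h : B = A <;> simp [h, Complex.ext_iff] <;> norm_num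
lemma Wb_coord (A B : Fin N) (x) : Wb A (fun y => y B) x = 0 := by
  rw [Wb, mix_coord]
  by_cases h : B = A <;> simp [h, Complex.ext_iff] <;> norm_num
lemma Wb_conj_coord (A B : Fin N) (x) : Wb A (fun y => (starRingEnd ℂ) (y B)) x = if B = A then 1 else 0 := by
  rw [Wb, mix_conj_coord]
  by_cases h : B = A <;> simp [h, Complex.ext_iff] <;> norm_num

end Aux2

section Aux3
variable {N : ℕ}

lemma Wd_add {g h : (Fin N → ℂ) → ℂ} (hg : ContDiff ℝ (⊤:ℕ∞) g) (hh : ContDiff ℝ (⊤:ℕ∞) h)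
    (A : Fin N) (x) : Wd A (fun y => g y + h y) x = Wd A g x + Wd A h x := mix_add _ _ _ hg hh x
lemma Wb_add {g h : (Fin N → ℂ) → ℂ} (hg : ContDiff ℝ (⊤:ℕ∞) g) (hh : ContDiff ℝ (⊤:ℕ∞) h)
    (A : Fin N) (x) : Wb A (fun y => g y + h y) x = Wb A g x + Wb A h x := mix_add _ _ _ hg hh x
lemma Wd_const_mul {g : (Fin N → ℂ) → ℂ} (hg : ContDiff ℝ (⊤:ℕ∞) g) (c : ℂ) (A : Fin N) (x) :
    Wd A (fun y => c * g y) x = c * Wd A g x := mix_const_mul _ _ _ hg c x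
lemma Wb_const_mul {g : (Fin N → ℂ) → ℂ} (hg : ContDiff ℝ (⊤:ℕ∞) g) (c : ℂ) (A : Fin N) (x) :
    Wb A (fun y => c * g y) x = c * Wb A g x := mix_const_mul _ _ _ hg c x
lemma Wd_mul {g h : (Fin N → ℂ) → ℂ} (hg : ContDiff ℝ (⊤:ℕ∞) g) (hh : ContDiff ℝ (⊤:ℕ∞) h)
    (A : Fin N) (x) : Wd A (fun y => g y * h y) x = g x * Wd A h x + h x * Wd A g x :=
  mix_mul _ _ _ hg hh x
lemma Wb_mul {g h : (Fin N → ℂ) → ℂ} (hg : ContDiff ℝ (⊤:ℕ∞) g) (hh : ContDiff ℝ (⊤:ℕ∞) h)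
    (A : Fin N) (x) : Wb A (fun y => g y * h y) x = g x * Wb A h x + h x * Wb A g x :=
  mix_mul _ _ _ hg hh x
lemma Wd_sum {ι : Type*} (s : Finset ι) (g : ι → (Fin N → ℂ) → ℂ)
    (hg : ∀ i ∈ s, ContDiff ℝ (⊤:ℕ∞) (g i)) (A : Fin N) (x) :
    Wd A (fun y => ∑ i ∈ s, g i y) x = ∑ i ∈ s, Wd A (g i) x := mix_sum _ _ _ s g hg x
lemma Wb_sum {ι : Type*} (s : Finset ι) (g : ι → (Fin N → ℂ) → ℂ)
    (hg : ∀ i ∈ s, ContDiff ℝ (⊤:ℕ∞) (g i)) (A : Fin N) (x) :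
    Wb A (fun y => ∑ i ∈ s, g i y) x = ∑ i ∈ s, Wb A (g i) x := mix_sum _ _ _ s g hg x

lemma Wd_Wb_comm {f : (Fin N → ℂ) → ℂ} (hf : ContDiff ℝ (⊤:ℕ∞) f) (A B : Fin N) (x) :
    Wd A (Wb B f) x = Wb B (Wd A f) x := mix_comm _ _ _ _ A B hf x
lemma Wd_Wd_comm {f : (Fin N → ℂ) → ℂ} (hf : ContDiff ℝ (⊤:ℕ∞) f) (A B : Fin N) (x) :
    Wd A (Wd B f) x = Wd B (Wd A f) x := mix_comm _ _ _ _ A B hf x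
lemma Wb_Wb_comm {f : (Fin N → ℂ) → ℂ} (hf : ContDiff ℝ (⊤:ℕ∞) f) (A B : Fin N) (x) :
    Wb A (Wb B f) x = Wb B (Wb A f) x := mix_comm _ _ _ _ A B hf x

lemma rFun_eq (ε : Fin N → ℝ) :
    rFun ε = fun y => ∑ B, (ε B : ℂ) * (y B * (starRingEnd ℂ) (y B)) := by
  funext y
  simp [rFun, Complex.mul_conj]

lemma contDiff_rFun (ε : Fin N → ℝ) : ContDiff ℝ (⊤:ℕ∞) (rFun ε) := by
  rw [rFun_eq]
  exact ContDiff.sum fun B _ =>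
    contDiff_const.mul ((contDiff_coord B).mul (contDiff_conj_coord B))

lemma Wd_rFun (ε : Fin N → ℝ) (A : Fin N) (x) :
    Wd A (rFun ε) x = (ε A : ℂ) * (starRingEnd ℂ) (x A) := by
  rw [rFun_eq]
  rw [Wd_sum Finset.univ _ (fun B _ =>
    contDiff_const.mul ((contDiff_coord B).mul (contDiff_conj_coord B)))]
  have h : ∀ B : Fin N, Wd A (fun y => (ε B : ℂ) * (y B * (starRingEnd ℂ) (y B))) x
      = (ε B : ℂ) * ((starRingEnd ℂ) (x B) * (if B = A then 1 else 0)) := by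
    intro B
    rw [Wd_const_mul ((contDiff_coord B).mul (contDiff_conj_coord B)),
      Wd_mul (contDiff_coord B) (contDiff_conj_coord B),
      Wd_coord, Wd_conj_coord]
    ring
  simp only [h, mul_ite, mul_one, mul_zero]
  simp [Finset.sum_ite_eq']

lemma Wb_rFun (ε : Fin N → ℝ) (A : Fin N) (x) :
    Wb A (rFun ε) x = (ε A : ℂ) * x A := by
  rw [rFun_eq]
  rw [Wb_sum Finset.univ _ (fun B _ =>
    contDiff_const.mul ((contDiff_coord B).mul (contDiff_conj_coord B)))]
  have h : ∀ B : Fin N, Wb A (fun y => (ε B : ℂ) * (y B * (starRingEnd ℂ) (y B))) x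
      = (ε B : ℂ) * (x B * (if B = A then 1 else 0)) := by
    intro B
    rw [Wb_const_mul ((contDiff_coord B).mul (contDiff_conj_coord B)),
      Wb_mul (contDiff_coord B) (contDiff_conj_coord B),
      Wb_coord, Wb_conj_coord]
    ring
  simp only [h, mul_ite, mul_one, mul_zero]
  simp [Finset.sum_ite_eq']

lemma ambLap_eq (ε : Fin N → ℝ) (g : (Fin N → ℂ) → ℂ) :
    ambLap ε g = fun x => ∑ A, (ε A : ℂ) * Wd A (Wb A g) x := by
  funext x
  simp only [ambLap, wder_Wd, wderBar_Wb]

lemma eulerE_eq (g : (Fin N → ℂ) → ℂ) (x) : eulerE g x = ∑ A, x A * Wd A g x := by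
  simp only [eulerE, wder_Wd]
lemma eulerEbar_eq (g : (Fin N → ℂ) → ℂ) (x) :
    eulerEbar g x = ∑ A, (starRingEnd ℂ) (x A) * Wb A g x := by
  simp only [eulerEbar, wderBar_Wb]

lemma contDiff_ambLap (ε : Fin N → ℝ) {g : (Fin N → ℂ) → ℂ} (hg : ContDiff ℝ (⊤:ℕ∞) g) :
    ContDiff ℝ (⊤:ℕ∞) (ambLap ε g) := by
  rw [ambLap_eq]
  exact ContDiff.sum fun A _ => contDiff_const.mul (contDiff_Wd A (contDiff_Wb A hg))

lemma contDiff_EE {g : (Fin N → ℂ) → ℂ} (hg : ContDiff ℝ (⊤:ℕ∞) g) :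
    ContDiff ℝ (⊤:ℕ∞) (fun x => eulerE g x + eulerEbar g x) := by
  have h1 : ContDiff ℝ (⊤:ℕ∞) (fun x => eulerE g x) := by
    simp only [eulerE_eq]
    exact ContDiff.sum fun A _ => (contDiff_coord A).mul (contDiff_Wd A hg)
  have h2 : ContDiff ℝ (⊤:ℕ∞) (fun x => eulerEbar g x) := by
    simp only [eulerEbar_eq]
    exact ContDiff.sum fun A _ => (contDiff_conj_coord A).mul (contDiff_Wb A hg)
  exact h1.add h2

end Aux3

section Aux4
variable {N : ℕ}

lemma lap_r_mul (ε : Fin N → ℝ) (hε : ∀ A, ε A = 1 ∨ ε A = -1)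
    {g : (Fin N → ℂ) → ℂ} (hg : ContDiff ℝ (⊤:ℕ∞) g) (x : Fin N → ℂ) :
    ambLap ε (fun y => rFun ε y * g y) x
      = rFun ε x * ambLap ε g x + (eulerE g x + eulerEbar g x) + N * g x := by
  have hε2 : ∀ A, (ε A : ℂ) * (ε A : ℂ) = 1 := by
    intro A
    rcases hε A with h | h <;> rw [h] <;> norm_num
  have hr := contDiff_rFun ε
  have key : ∀ A, (ε A : ℂ) * Wd A (Wb A (fun y => rFun ε y * g y)) x
      = rFun ε x * ((ε A : ℂ) * Wd A (Wb A g) x)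
        + (starRingEnd ℂ) (x A) * Wb A g x + x A * Wd A g x + g x := by
    intro A
    have hWb : Wb A (fun y => rFun ε y * g y)
        = fun y => rFun ε y * Wb A g y + g y * ((ε A : ℂ) * y A) := by
      funext y
      rw [Wb_mul hr hg, Wb_rFun]
      try ring
    have hs1 : ContDiff ℝ (⊤:ℕ∞) (fun y => rFun ε y * Wb A g y) := hr.mul (contDiff_Wb A hg)
    have hs2 : ContDiff ℝ (⊤:ℕ∞) (fun y : Fin N → ℂ => g y * ((ε A : ℂ) * y A)) :=
      hg.mul (contDiff_const.mul (contDiff_coord A))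
    rw [hWb, Wd_add hs1 hs2, Wd_mul hr (contDiff_Wb A hg),
      Wd_mul hg (contDiff_const.mul (contDiff_coord A)), Wd_rFun,
      Wd_const_mul (contDiff_coord A), Wd_coord, if_pos rfl]
    have hA := hε2 A
    linear_combination ((starRingEnd ℂ) (x A) * Wb A g x + g x + x A * Wd A g x) * hA
  rw [ambLap_eq, ambLap_eq]
  simp only []
  rw [Finset.sum_congr rfl (fun A _ => key A)]
  rw [eulerE_eq, eulerEbar_eq]
  simp only [Finset.sum_add_distrib, ← Finset.mul_sum, Finset.sum_const, Finset.card_univ,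
    Fintype.card_fin, nsmul_eq_mul]
  ring

lemma lap_add_const_mul (ε : Fin N → ℝ) {g h : (Fin N → ℂ) → ℂ}
    (hg : ContDiff ℝ (⊤:ℕ∞) g) (hh : ContDiff ℝ (⊤:ℕ∞) h) (c : ℂ) (x : Fin N → ℂ) :
    ambLap ε (fun y => g y + c * h y) x = ambLap ε g x + c * ambLap ε h x := by
  have hch : ContDiff ℝ (⊤:ℕ∞) (fun y => c * h y) := contDiff_const.mul hh
  have hWb : ∀ A : Fin N, Wb A (fun y => g y + c * h y)
      = fun y => Wb A g y + c * Wb A h y := by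
    intro A; funext y
    rw [Wb_add hg hch, Wb_const_mul hh]
  rw [ambLap_eq, ambLap_eq, ambLap_eq]
  simp only []
  rw [Finset.mul_sum, ← Finset.sum_add_distrib]
  refine Finset.sum_congr rfl fun A _ => ?_
  rw [hWb A, Wd_add (contDiff_Wb A hg) (contDiff_const.mul (contDiff_Wb A hh)),
    Wd_const_mul (contDiff_Wb A hh)]
  ring

end Aux4

section Aux5
variable {N : ℕ}

lemma lap_euler_comm (ε : Fin N → ℝ) {g : (Fin N → ℂ) → ℂ}
    (hg : ContDiff ℝ (⊤:ℕ∞) g) (x : Fin N → ℂ) :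
    ambLap ε (fun y => eulerE g y + eulerEbar g y) x
      = eulerE (ambLap ε g) x + eulerEbar (ambLap ε g) x + 2 * ambLap ε g x := by
  have hWd : ∀ B, ContDiff ℝ (⊤:ℕ∞) (Wd B g) := fun B => contDiff_Wd B hg
  have hWb : ∀ B, ContDiff ℝ (⊤:ℕ∞) (Wb B g) := fun B => contDiff_Wb B hg
  have hterm : ∀ B : Fin N, ContDiff ℝ (⊤:ℕ∞)
      (fun y => y B * Wd B g y + (starRingEnd ℂ) (y B) * Wb B g y) := fun B =>
    ((contDiff_coord B).mul (hWd B)).add ((contDiff_conj_coord B).mul (hWb B))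
  have hEE : (fun y => eulerE g y + eulerEbar g y)
      = fun y => ∑ B, (y B * Wd B g y + (starRingEnd ℂ) (y B) * Wb B g y) := by
    funext y
    rw [eulerE_eq, eulerEbar_eq, ← Finset.sum_add_distrib]
  have hWbEE : ∀ A, Wb A (fun y => eulerE g y + eulerEbar g y)
      = fun y => ∑ B, (y B * Wb A (Wd B g) y + (starRingEnd ℂ) (y B) * Wb A (Wb B g) y
          + (if B = A then (1:ℂ) else 0) * Wb B g y) := by
    intro A
    funext y
    rw [hEE, Wb_sum Finset.univ _ (fun B _ => hterm B)]
    refine Finset.sum_congr rfl fun B _ => ?_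
    rw [Wb_add ((contDiff_coord B).mul (hWd B)) ((contDiff_conj_coord B).mul (hWb B)),
      Wb_mul (contDiff_coord B) (hWd B), Wb_mul (contDiff_conj_coord B) (hWb B),
      Wb_coord, Wb_conj_coord]
    ring
  have hs1 : ∀ A B : Fin N, ContDiff ℝ (⊤:ℕ∞) (fun y => y B * Wb A (Wd B g) y) :=
    fun A B => (contDiff_coord B).mul (contDiff_Wb A (hWd B))
  have hs2 : ∀ A B : Fin N, ContDiff ℝ (⊤:ℕ∞)
      (fun y => (starRingEnd ℂ) (y B) * Wb A (Wb B g) y) :=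
    fun A B => (contDiff_conj_coord B).mul (contDiff_Wb A (hWb B))
  have hs3 : ∀ A B : Fin N, ContDiff ℝ (⊤:ℕ∞)
      (fun y => (if B = A then (1:ℂ) else 0) * Wb B g y) :=
    fun A B => contDiff_const.mul (hWb B)
  have hWdWbEE : ∀ A, Wd A (Wb A (fun y => eulerE g y + eulerEbar g y)) x
      = ∑ B, (x B * Wd A (Wb A (Wd B g)) x
          + (if B = A then (1:ℂ) else 0) * Wb A (Wd B g) x
          + (starRingEnd ℂ) (x B) * Wd A (Wb A (Wb B g)) x
          + (if B = A then (1:ℂ) else 0) * Wd A (Wb B g) x) := by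
    intro A
    rw [hWbEE A, Wd_sum Finset.univ _
      (fun B _ => ((hs1 A B).add (hs2 A B)).add (hs3 A B))]
    refine Finset.sum_congr rfl fun B _ => ?_
    rw [Wd_add ((hs1 A B).add (hs2 A B)) (hs3 A B), Wd_add (hs1 A B) (hs2 A B),
      Wd_mul (contDiff_coord B) (contDiff_Wb A (hWd B)),
      Wd_mul (contDiff_conj_coord B) (contDiff_Wb A (hWb B)),
      Wd_const_mul (hWb B), Wd_coord, Wd_conj_coord]
    ring
  have hc1 : ∀ A B : Fin N, Wd A (Wb A (Wd B g)) x = Wd B (Wd A (Wb A g)) x := by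
    intro A B
    have e1 : Wb A (Wd B g) = Wd B (Wb A g) := funext fun y => (Wd_Wb_comm hg B A y).symm
    rw [e1]
    exact Wd_Wd_comm (contDiff_Wb A hg) A B x
  have hc2 : ∀ A B : Fin N, Wd A (Wb A (Wb B g)) x = Wb B (Wd A (Wb A g)) x := by
    intro A B
    have e1 : Wb A (Wb B g) = Wb B (Wb A g) := funext fun y => Wb_Wb_comm hg A B y
    rw [e1]
    exact Wd_Wb_comm (contDiff_Wb A hg) A B x
  have hc3 : ∀ A : Fin N, Wb A (Wd A g) x = Wd A (Wb A g) x :=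
    fun A => (Wd_Wb_comm hg A A x).symm
  have hWdLap : ∀ B, Wd B (ambLap ε g) x = ∑ A, (ε A : ℂ) * Wd B (Wd A (Wb A g)) x := by
    intro B
    rw [ambLap_eq, Wd_sum Finset.univ _
      (fun A _ => contDiff_const.mul (contDiff_Wd A (contDiff_Wb A hg)))]
    exact Finset.sum_congr rfl fun A _ =>
      Wd_const_mul (contDiff_Wd A (contDiff_Wb A hg)) _ B x
  have hWbLap : ∀ B, Wb B (ambLap ε g) x = ∑ A, (ε A : ℂ) * Wb B (Wd A (Wb A g)) x := by
    intro B
    rw [ambLap_eq, Wb_sum Finset.univ _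
      (fun A _ => contDiff_const.mul (contDiff_Wd A (contDiff_Wb A hg)))]
    exact Finset.sum_congr rfl fun A _ =>
      Wb_const_mul (contDiff_Wd A (contDiff_Wb A hg)) _ B x
  -- assemble
  rw [show ambLap ε (fun y => eulerE g y + eulerEbar g y) x
      = ∑ A, (ε A : ℂ) * Wd A (Wb A (fun y => eulerE g y + eulerEbar g y)) x from by
    rw [ambLap_eq]]
  simp only [hWdWbEE, hc1, hc2]
  simp only [ite_mul, one_mul, zero_mul, Finset.sum_ite_eq', Finset.mem_univ, if_true, hc3]
  simp only [mul_add, Finset.mul_sum, Finset.sum_add_distrib]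
  rw [eulerE_eq, eulerEbar_eq]
  simp only [hWdLap, hWbLap]
  rw [show ambLap ε g x = ∑ A, (ε A : ℂ) * Wd A (Wb A g) x from by rw [ambLap_eq]]
  rw [Finset.sum_comm (f := fun A B => (ε A : ℂ) * (x B * Wd B (Wd A (Wb A g)) x)),
    Finset.sum_comm (f := fun A B => (ε A : ℂ) * ((starRingEnd ℂ) (x B) * Wb B (Wd A (Wb A g)) x))]
  simp only [mul_ite, mul_zero, Finset.sum_ite_eq', Finset.mem_univ, if_true, hc3]
  have hS1 : ∑ y : Fin N, ∑ A : Fin N, (ε A : ℂ) * (x y * Wd y (Wd A (Wb A g)) x)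
      = ∑ y : Fin N, x y * ∑ A : Fin N, (ε A : ℂ) * Wd y (Wd A (Wb A g)) x := by
    refine Finset.sum_congr rfl fun y _ => ?_
    rw [Finset.mul_sum]
    exact Finset.sum_congr rfl fun A _ => by ring
  have hS2 : ∑ y : Fin N, ∑ A : Fin N, (ε A : ℂ) * ((starRingEnd ℂ) (x y) * Wb y (Wd A (Wb A g)) x)
      = ∑ y : Fin N, (starRingEnd ℂ) (x y) * ∑ A : Fin N, (ε A : ℂ) * Wb y (Wd A (Wb A g)) x := by
    refine Finset.sum_congr rfl fun y _ => ?_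
    rw [Finset.mul_sum]
    exact Finset.sum_congr rfl fun A _ => by ring
  rw [hS1, hS2]
  ring

end Aux5

section Main
variable {N : ℕ}

lemma lap_const_mul (ε : Fin N → ℝ) {h : (Fin N → ℂ) → ℂ} (hh : ContDiff ℝ (⊤:ℕ∞) h)
    (c : ℂ) (x : Fin N → ℂ) : ambLap ε (fun y => c * h y) x = c * ambLap ε h x := by
  rw [ambLap_eq, ambLap_eq]
  simp only []
  rw [Finset.mul_sum]
  refine Finset.sum_congr rfl fun A _ => ?_
  have hWb : Wb A (fun y => c * h y) = fun y => c * Wb A h y :=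
    funext fun y => Wb_const_mul hh c A y
  rw [hWb, Wd_const_mul (contDiff_Wb A hh)]
  ring

lemma lap_iter_smooth (ε : Fin N → ℝ) {f : (Fin N → ℂ) → ℂ} (hf : ContDiff ℝ (⊤:ℕ∞) f)
    (j : ℕ) : ContDiff ℝ (⊤:ℕ∞) ((ambLap ε)^[j] f) := by
  induction j with
  | zero => exact hf
  | succ j ih => rw [Function.iterate_succ_apply']; exact contDiff_ambLap ε ih

lemma EE_lap_iter (ε : Fin N → ℝ) {f : (Fin N → ℂ) → ℂ} (hf : ContDiff ℝ (⊤:ℕ∞) f)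
    (c : ℂ) (hhom : ∀ x, eulerE f x + eulerEbar f x = c * f x) (j : ℕ) :
    ∀ x, eulerE ((ambLap ε)^[j] f) x + eulerEbar ((ambLap ε)^[j] f) x
      = (c - 2 * j) * (ambLap ε)^[j] f x := by
  induction j with
  | zero => simpa using hhom
  | succ j ih =>
    intro x
    have hg : ContDiff ℝ (⊤:ℕ∞) ((ambLap ε)^[j] f) := lap_iter_smooth ε hf j
    have h1 := lap_euler_comm ε hg x
    have h2 : (fun y => eulerE ((ambLap ε)^[j] f) y + eulerEbar ((ambLap ε)^[j] f) y)
        = fun y => (c - 2 * j) * (ambLap ε)^[j] f y := funext ih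
    rw [h2, lap_const_mul ε hg] at h1
    rw [Function.iterate_succ_apply']
    push_cast
    linear_combination -h1

lemma main_ind (ε : Fin N → ℝ) (hε : ∀ A, ε A = 1 ∨ ε A = -1)
    {f : (Fin N → ℂ) → ℂ} (hf : ContDiff ℝ (⊤:ℕ∞) f) (c : ℂ)
    (hhom : ∀ x, eulerE f x + eulerEbar f x = c * f x) (j : ℕ) :
    ∀ x, (ambLap ε)^[j + 1] (fun y => rFun ε y * f y) x
      = rFun ε x * (ambLap ε)^[j + 1] f x
        + ((j : ℂ) + 1) * (c + N - j) * (ambLap ε)^[j] f x := by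
  induction j with
  | zero =>
    intro x
    simp only [zero_add, Function.iterate_one, Function.iterate_zero, id_eq, Nat.cast_zero]
    rw [lap_r_mul ε hε hf x, hhom x]
    ring
  | succ j ih =>
    intro x
    have hgj : ContDiff ℝ (⊤:ℕ∞) ((ambLap ε)^[j] f) := lap_iter_smooth ε hf j
    have hgj1 : ContDiff ℝ (⊤:ℕ∞) ((ambLap ε)^[j + 1] f) := lap_iter_smooth ε hf (j + 1)
    have hfun : (ambLap ε)^[j + 1] (fun y => rFun ε y * f y)
        = fun y => rFun ε y * (ambLap ε)^[j + 1] f y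
          + ((j : ℂ) + 1) * (c + N - j) * (ambLap ε)^[j] f y := funext ih
    rw [Function.iterate_succ_apply', hfun,
      lap_add_const_mul ε ((contDiff_rFun ε).mul hgj1) hgj _ x,
      lap_r_mul ε hε hgj1 x, EE_lap_iter ε hf c hhom (j + 1) x,
      show ambLap ε ((ambLap ε)^[j] f) x = (ambLap ε)^[j + 1] f x from
        (Function.iterate_succ_apply' (ambLap ε) j f ▸ rfl),
      show ambLap ε ((ambLap ε)^[j + 1] f) x = (ambLap ε)^[j + 1 + 1] f x from
        (Function.iterate_succ_apply' (ambLap ε) (j + 1) f ▸ rfl)]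
    push_cast
    ring

end Main

/-- The flat-model case of the tangentiality statement `[Δ^k, r] = r·Op` on ambient functions
of total homogeneity `E + Ē = k − 1 − N`, which makes the CR GJMS operator
`P_{2k} f = (−2Δ)^k f̃ |_𝒩` independent of the chosen homogeneous ambient extension. -/
theorem lap_pow_r_tangential (N : ℕ) (hN : 1 ≤ N) (ε : Fin N → ℝ)
    (hε : ∀ A, ε A = 1 ∨ ε A = -1) (k : ℕ) (hk : 0 < k)
    (f : (Fin N → ℂ) → ℂ) (hf : ContDiff ℝ (⊤ : ℕ∞) f)
    (hhom : ∀ x : Fin N → ℂ, eulerE f x + eulerEbar f x = ((k : ℂ) - 1 - N) * f x) :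
    (∀ x : Fin N → ℂ,
        (ambLap ε)^[k] (fun y => rFun ε y * f y) x = rFun ε x * (ambLap ε)^[k] f x) ∧
    (∀ x : Fin N → ℂ, rFun ε x = 0 →
        (ambLap ε)^[k] (fun y => rFun ε y * f y) x = 0) := by
  obtain ⟨m, rfl⟩ : ∃ m, k = m + 1 := ⟨k - 1, (Nat.succ_pred_eq_of_pos hk).symm⟩
  have h1 : ∀ x : Fin N → ℂ,
      (ambLap ε)^[m + 1] (fun y => rFun ε y * f y) x
        = rFun ε x * (ambLap ε)^[m + 1] f x := by
    intro x
    rw [main_ind ε hε hf (((m + 1 : ℕ) : ℂ) - 1 - N) hhom m x]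
    push_cast
    ring
  exact ⟨h1, fun x hx => by rw [h1 x, hx, zero_mul]⟩
end
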